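/- arXiv:1601.00013 — 4 statements merged into one kernel-verified Lean document; each statement's English description precedes it below -/
import Mathlib

section
/- Let a : ℕ → ℕ be Stern's diatomic sequence, defined by a(1) = 1, a(2n) = a(n), and a(2n+1) = a(n) + a(n+1) for n ≥ 1. Then the sequence q(n) := a(n)/a(n+1), n = 1, 2, …, contains every positive rational number exactly once; that is, the map n ↦ a(n)/a(n+1) is a bijection from the positive integers onto the positive rational numbers. -/
/-!
For `n ≥ 1` the pairs `(a n, a (n + 1))` form the Calkin–Wilf tree: the pair at `2n` is
`(x, x + y)` and the pair at `2n + 1` is `(x + y, y)`, where `(x, y)` is the pair at `n`.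
Hence every pair is coprime, running the subtractive Euclidean algorithm backwards from `(1, 1)`
reaches every coprime pair, and running it forwards (`calkinWilfIndex`) recovers `n` from its
pair. Since a positive rational is the ratio of exactly one coprime pair, the claim follows.
-/

theorem Nat.le_induction_two_mul {P : ℕ → Prop} (one : P 1)
    (even : ∀ k, 1 ≤ k → P k → P (2 * k)) (odd : ∀ k, 1 ≤ k → P k → P (2 * k + 1)) :
    ∀ n, 1 ≤ n → P n := by
  intro n
  induction n using Nat.strong_induction_on with
  | _ n ih =>
    intro hn
    obtain ⟨k, rfl | rfl⟩ := Nat.even_or_odd' n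
    · exact even k (by omega) (ih k (by omega) (by omega))
    · rcases Nat.eq_zero_or_pos k with rfl | hk
      · exact one
      · exact odd k hk (ih k (by omega) hk)

theorem Rat.natCast_div_natCast_eq_iff {x y : ℕ} (hy : 0 < y) (hxy : x.Coprime y) {q : ℚ} :
    (x : ℚ) / y = q ↔ (x : ℤ) = q.num ∧ y = q.den := by
  have hxy' : (x : ℤ).natAbs.Coprime (y : ℤ).natAbs := hxy
  constructor
  · rintro rfl
    have hnum := Rat.num_div_eq_of_coprime (Int.natCast_pos.2 hy) hxy'
    have hden := Rat.den_div_eq_of_coprime (Int.natCast_pos.2 hy) hxy'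
    push_cast at hnum hden
    exact ⟨hnum.symm, by exact_mod_cast hden.symm⟩
  · rintro ⟨hx, rfl⟩
    rw [← Int.cast_natCast, hx, Rat.num_div_den]

def calkinWilfIndex (p s : ℕ) : ℕ :=
  if p = 0 ∨ s = 0 then 0
  else if p < s then 2 * calkinWilfIndex p (s - p)
  else if s < p then 2 * calkinWilfIndex (p - s) s + 1
  else 1
termination_by p + s
decreasing_by all_goals omega

theorem calkinWilfIndex_one_one : calkinWilfIndex 1 1 = 1 := by
  rw [calkinWilfIndex]; simp

theorem calkinWilfIndex_self_add {p t : ℕ} (hp : 0 < p) (ht : 0 < t) :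
    calkinWilfIndex p (p + t) = 2 * calkinWilfIndex p t := by
  rw [calkinWilfIndex, if_neg (by omega), if_pos (by omega), Nat.add_sub_cancel_left]

theorem calkinWilfIndex_add_self {t s : ℕ} (ht : 0 < t) (hs : 0 < s) :
    calkinWilfIndex (t + s) s = 2 * calkinWilfIndex t s + 1 := by
  rw [calkinWilfIndex, if_neg (by omega), if_neg (by omega), if_pos (by omega), Nat.add_sub_cancel]

section Stern

variable {a : ℕ → ℕ} (h1 : a 1 = 1) (heven : ∀ n : ℕ, 1 ≤ n → a (2 * n) = a n)
  (hodd : ∀ n : ℕ, 1 ≤ n → a (2 * n + 1) = a n + a (n + 1))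
include h1 heven hodd

theorem stern_pos : ∀ n, 1 ≤ n → 0 < a n :=
  Nat.le_induction_two_mul (by omega) (fun k hk ih => by rw [heven k hk]; exact ih)
    (fun k hk ih => by rw [hodd k hk]; omega)

theorem stern_coprime_succ : ∀ n, 1 ≤ n → (a n).Coprime (a (n + 1)) := by
  refine Nat.le_induction_two_mul ?_ (fun k hk ih => ?_) (fun k hk ih => ?_)
  · simp [h1]
  · rw [heven k hk, hodd k hk]
    exact Nat.coprime_self_add_right.2 ih
  · rw [show 2 * k + 1 + 1 = 2 * (k + 1) by ring, heven (k + 1) (by omega), hodd k hk]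
    exact Nat.coprime_add_self_left.2 ih

theorem exists_stern_pair_eq (p s : ℕ) (hp : 0 < p) (hs : 0 < s) (hps : p.Coprime s) :
    ∃ n, 1 ≤ n ∧ a n = p ∧ a (n + 1) = s := by
  induction hN : p + s using Nat.strong_induction_on generalizing p s with
  | _ N ih =>
    rcases lt_trichotomy p s with hlt | rfl | hgt
    · obtain ⟨t, rfl⟩ := Nat.exists_eq_add_of_lt hlt
      obtain ⟨n, hn, hpn, htn⟩ := ih (p + (t + 1)) (by omega) p (t + 1) hp (by omega)
        (Nat.coprime_self_add_right.1 hps) rfl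
      exact ⟨2 * n, by omega, by rw [heven n hn, hpn], by rw [hodd n hn, hpn, htn]; ring⟩
    · obtain rfl : p = 1 := by simpa using hps
      exact ⟨1, le_rfl, h1, by rw [heven 1 le_rfl, h1]⟩
    · obtain ⟨t, rfl⟩ := Nat.exists_eq_add_of_lt hgt
      obtain ⟨n, hn, hpn, htn⟩ := ih (t + 1 + s) (by omega) (t + 1) s (by omega) hs
        (Nat.coprime_add_self_left.1 (by rwa [show t + 1 + s = s + t + 1 by ring])) rfl
      refine ⟨2 * n + 1, by omega, by rw [hodd n hn, hpn, htn]; ring, ?_⟩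
      rw [show 2 * n + 1 + 1 = 2 * (n + 1) by ring, heven (n + 1) (by omega), htn]

theorem calkinWilfIndex_stern : ∀ n, 1 ≤ n → calkinWilfIndex (a n) (a (n + 1)) = n := by
  have pos := stern_pos h1 heven hodd
  refine Nat.le_induction_two_mul ?_ (fun k hk ih => ?_) (fun k hk ih => ?_)
  · rw [h1, heven 1 le_rfl, h1, calkinWilfIndex_one_one]
  · rw [heven k hk, hodd k hk, calkinWilfIndex_self_add (pos k hk) (pos (k + 1) (by omega)), ih]
  · rw [show 2 * k + 1 + 1 = 2 * (k + 1) by ring, heven (k + 1) (by omega), hodd k hk,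
      calkinWilfIndex_add_self (pos k hk) (pos (k + 1) (by omega)), ih]

end Stern

/-- For Stern's diatomic sequence `a` (with `a 1 = 1`,
`a (2n) = a n`, `a (2n+1) = a n + a (n+1)` for `n ≥ 1`), the Calkin–Wilf
sequence `q n = a n / a (n+1)` contains every positive rational exactly once:
for every positive rational `q` there is a unique `n ≥ 1` with
`a n / a (n+1) = q`. -/
theorem calkin_wilf_enumerates_positive_rationals
    (a : ℕ → ℕ)
    (h1 : a 1 = 1)
    (heven : ∀ n : ℕ, 1 ≤ n → a (2 * n) = a n)
    (hodd : ∀ n : ℕ, 1 ≤ n → a (2 * n + 1) = a n + a (n + 1)) :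
    ∀ q : ℚ, 0 < q → ∃! n : ℕ, 1 ≤ n ∧ (a n : ℚ) / (a (n + 1) : ℚ) = q := by
  intro q hq
  have ratio_eq_iff (n : ℕ) (hn : 1 ≤ n) :
      (a n : ℚ) / (a (n + 1) : ℚ) = q ↔ (a n : ℤ) = q.num ∧ a (n + 1) = q.den :=
    Rat.natCast_div_natCast_eq_iff (stern_pos h1 heven hodd (n + 1) (by omega))
      (stern_coprime_succ h1 heven hodd n hn)
  have hnum : (q.num.natAbs : ℤ) = q.num := Int.natAbs_of_nonneg (Rat.num_nonneg.2 hq.le)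
  obtain ⟨n, hn, hnum_n, hden_n⟩ := exists_stern_pair_eq h1 heven hodd q.num.natAbs q.den
    (Int.natAbs_pos.2 (Rat.num_pos.2 hq).ne') q.den_pos q.reduced
  refine ⟨n, ⟨hn, (ratio_eq_iff n hn).2 ⟨by rw [hnum_n, hnum], hden_n⟩⟩, ?_⟩
  rintro m ⟨hm, hmq⟩
  obtain ⟨hnum_m, hden_m⟩ := (ratio_eq_iff m hm).1 hmq
  have hnum_eq : a m = a n := by omega
  rw [← calkinWilfIndex_stern h1 heven hodd m hm, ← calkinWilfIndex_stern h1 heven hodd n hn,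
    hnum_eq, hden_m, hden_n]
end

section
/- Let a : ℕ → ℕ be Stern's diatomic sequence (a(1) = 1, a(2n) = a(n), a(2n+1) = a(n) + a(n+1)) and q(n) := a(n)/a(n+1) the Calkin–Wilf sequence. Define r(0) := 0, r(2n) := q(n), and r(2n−1) := −q(n) for n ≥ 1. Then the map n ↦ r(n) is a bijection from the nonnegative integers onto the rational numbers. -/
/-!
Stern's recurrences say exactly that `q n = a n / a (n + 1)` satisfies `q 1 = 1`,
`q (2n) = q n / (q n + 1)` and `q (2n + 1) = q n + 1`, i.e. `q` labels the Calkin–Wilf tree.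
Comparing a label with `1` tells whether its node is the root, a left or a right child, which
gives injectivity; running the subtractive Euclidean algorithm on `p / q` backwards reaches it
from the root, which gives surjectivity onto the positive rationals. Interleaving these labels
with their negatives and `0` then enumerates `ℚ`.
-/

open Function Set

theorem Nat.eq_one_or_exists_eq_two_mul_or_eq_two_mul_add_one {n : ℕ} (hn : 1 ≤ n) :
    n = 1 ∨ ∃ k, 1 ≤ k ∧ (n = 2 * k ∨ n = 2 * k + 1) := by
  obtain ⟨k, rfl | rfl⟩ := n.even_or_odd'
  · exact .inr ⟨k, by omega, .inl rfl⟩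
  · rcases k.eq_zero_or_pos with rfl | hk
    · exact .inl rfl
    · exact .inr ⟨k, hk, .inr rfl⟩

theorem Nat.eq_zero_or_exists_eq_two_mul_or_eq_two_mul_sub_one (n : ℕ) :
    n = 0 ∨ ∃ k, 1 ≤ k ∧ (n = 2 * k ∨ n = 2 * k - 1) := by
  obtain ⟨k, rfl | rfl⟩ := n.even_or_odd'
  · rcases k.eq_zero_or_pos with rfl | hk
    · exact .inl rfl
    · exact .inr ⟨k, hk, .inl rfl⟩
  · exact .inr ⟨k + 1, by omega, .inr (by omega)⟩

theorem Nat.le_induction_two_mul_s6 {P : ∀ n, 1 ≤ n → Prop} (one : P 1 le_rfl)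
    (two_mul : ∀ n hn, P n hn → P (2 * n) (by omega))
    (two_mul_add_one : ∀ n hn, P n hn → P (2 * n + 1) (by omega)) :
    ∀ n hn, P n hn := by
  intro n hn
  induction n using Nat.strong_induction_on with
  | _ n ih =>
    obtain rfl | ⟨k, hk, rfl | rfl⟩ := Nat.eq_one_or_exists_eq_two_mul_or_eq_two_mul_add_one hn
    · exact one
    · exact two_mul k hk (ih k (by omega) hk)
    · exact two_mul_add_one k hk (ih k (by omega) hk)

/-- Labels of the Calkin–Wilf tree, its nodes numbered breadth-first from `1`. -/
structure IsCalkinWilf (f : ℕ → ℚ) : Prop where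
  one : f 1 = 1
  two_mul : ∀ n, 1 ≤ n → f (2 * n) = f n / (f n + 1)
  two_mul_add_one : ∀ n, 1 ≤ n → f (2 * n + 1) = f n + 1

namespace IsCalkinWilf

variable {f : ℕ → ℚ}

theorem pos (hf : IsCalkinWilf f) {n : ℕ} (hn : 1 ≤ n) : 0 < f n := by
  induction n, hn using Nat.le_induction_two_mul_s6 with
  | one => rw [hf.one]; exact one_pos
  | two_mul n hn ih => rw [hf.two_mul n hn]; positivity
  | two_mul_add_one n hn ih => rw [hf.two_mul_add_one n hn]; positivity

theorem two_mul_lt_one (hf : IsCalkinWilf f) {n : ℕ} (hn : 1 ≤ n) : f (2 * n) < 1 := by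
  have := hf.pos hn
  rw [hf.two_mul n hn, div_lt_one (by positivity)]
  linarith

theorem one_lt_two_mul_add_one (hf : IsCalkinWilf f) {n : ℕ} (hn : 1 ≤ n) :
    1 < f (2 * n + 1) := by
  rw [hf.two_mul_add_one n hn]
  linarith [hf.pos hn]

theorem injOn (hf : IsCalkinWilf f) : InjOn f (Ici 1) := by
  have hlt := fun k (hk : 1 ≤ k) => hf.two_mul_lt_one hk
  have hgt := fun k (hk : 1 ≤ k) => hf.one_lt_two_mul_add_one hk
  intro m (hm : 1 ≤ m) n (hn : 1 ≤ n) hmn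
  induction m, hm using Nat.le_induction_two_mul_s6 generalizing n with
  | one =>
    obtain rfl | ⟨k, hk, rfl | rfl⟩ := Nat.eq_one_or_exists_eq_two_mul_or_eq_two_mul_add_one hn <;>
    grind [hf.one]
  | two_mul j hj ih =>
    obtain rfl | ⟨k, hk, rfl | rfl⟩ := Nat.eq_one_or_exists_eq_two_mul_or_eq_two_mul_add_one hn
    · grind [hf.one]
    · have := hf.pos hj
      have := hf.pos hk
      grind [hf.two_mul]
    · grind
  | two_mul_add_one j hj ih =>
    obtain rfl | ⟨k, hk, rfl | rfl⟩ := Nat.eq_one_or_exists_eq_two_mul_or_eq_two_mul_add_one hn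
    · grind [hf.one]
    · grind
    · grind [hf.two_mul_add_one]

theorem exists_eq_div (hf : IsCalkinWilf f) {p q : ℕ} (hp : 0 < p) (hq : 0 < q) :
    ∃ n, 1 ≤ n ∧ f n = p / q := by
  induction h : p + q using Nat.strong_induction_on generalizing p q with
  | _ s ih =>
    rcases lt_trichotomy p q with hpq | rfl | hpq
    · obtain ⟨d, rfl⟩ := Nat.exists_eq_add_of_lt hpq
      obtain ⟨n, hn, hfn⟩ := ih (p + (d + 1)) (by omega) hp d.succ_pos rfl
      refine ⟨2 * n, by omega, ?_⟩
      rw [hf.two_mul n hn, hfn]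
      field_simp
      push_cast
      ring
    · exact ⟨1, le_rfl, by rw [hf.one, div_self (by positivity)]⟩
    · obtain ⟨d, rfl⟩ := Nat.exists_eq_add_of_lt hpq
      obtain ⟨n, hn, hfn⟩ := ih (d + 1 + q) (by omega) d.succ_pos hq rfl
      refine ⟨2 * n + 1, by omega, ?_⟩
      rw [hf.two_mul_add_one n hn, hfn]
      field_simp
      push_cast
      ring

theorem bijOn (hf : IsCalkinWilf f) : BijOn f (Ici 1) (Ioi 0) := by
  refine ⟨fun n hn => hf.pos hn, hf.injOn, fun x (hx : 0 < x) => ?_⟩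
  lift x to ℚ≥0 using hx.le
  obtain ⟨n, hn, hfn⟩ := hf.exists_eq_div (p := x.num) (by simpa using hx) x.den_pos
  exact ⟨n, hn, hfn.trans (NNRat.cast_def x).symm⟩

end IsCalkinWilf

theorem stern_pos_s6 {a : ℕ → ℕ} (h1 : a 1 = 1) (heven : ∀ n, 1 ≤ n → a (2 * n) = a n)
    (hodd : ∀ n, 1 ≤ n → a (2 * n + 1) = a n + a (n + 1)) {n : ℕ} (hn : 1 ≤ n) : 0 < a n := by
  induction n, hn using Nat.le_induction_two_mul_s6 with
  | one => rw [h1]; exact one_pos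
  | two_mul n hn ih => rwa [heven n hn]
  | two_mul_add_one n hn ih => rw [hodd n hn]; exact Nat.add_pos_left ih _

theorem isCalkinWilf_stern_ratio {a : ℕ → ℕ} (h1 : a 1 = 1)
    (heven : ∀ n, 1 ≤ n → a (2 * n) = a n)
    (hodd : ∀ n, 1 ≤ n → a (2 * n + 1) = a n + a (n + 1)) :
    IsCalkinWilf fun n => (a n : ℚ) / a (n + 1) := by
  have hpos {n : ℕ} (hn : 1 ≤ n) : (0 : ℚ) < a n := mod_cast stern_pos_s6 h1 heven hodd hn
  refine ⟨?_, fun n hn => ?_, fun n hn => ?_⟩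
  · simp [h1, heven 1 le_rfl]
  · have := hpos hn
    have := hpos (Nat.le_add_left 1 n)
    rw [heven n hn, hodd n hn]
    push_cast
    field_simp
  · have := hpos (Nat.le_add_left 1 n)
    rw [show 2 * n + 1 + 1 = 2 * (n + 1) by ring, hodd n hn, heven (n + 1) (by omega)]
    push_cast
    field_simp

theorem bijective_interleave_of_bijOn {α : Type*} [AddCommGroup α] [LinearOrder α]
    [IsOrderedAddMonoid α] {f r : ℕ → α} (hf : BijOn f (Ici 1) (Ioi 0))
    (hr0 : r 0 = 0) (hreven : ∀ n, 1 ≤ n → r (2 * n) = f n)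
    (hrodd : ∀ n, 1 ≤ n → r (2 * n - 1) = -f n) : Bijective r := by
  have hpos : ∀ n, 1 ≤ n → 0 < f n := fun n hn => hf.mapsTo hn
  have hinj : ∀ m n, 1 ≤ m → 1 ≤ n → f m = f n → m = n := fun m n hm hn => hf.injOn hm hn
  refine ⟨fun m n hmn => ?_, fun x => ?_⟩
  -- `r` vanishes only at `0`, is positive at even and negative at odd indices.
  · obtain rfl | ⟨j, hj, rfl | rfl⟩ := m.eq_zero_or_exists_eq_two_mul_or_eq_two_mul_sub_one <;>
    obtain rfl | ⟨k, hk, rfl | rfl⟩ := n.eq_zero_or_exists_eq_two_mul_or_eq_two_mul_sub_one <;>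
    grind
  · rcases lt_trichotomy x 0 with hx | rfl | hx
    · obtain ⟨n, hn, hfn⟩ := hf.surjOn (neg_pos.mpr hx)
      exact ⟨2 * n - 1, by rw [hrodd n hn, hfn, neg_neg]⟩
    · exact ⟨0, hr0⟩
    · obtain ⟨n, hn, hfn⟩ := hf.surjOn hx
      exact ⟨2 * n, by rw [hreven n hn, hfn]⟩

/-- With `a` Stern's diatomic sequence and
`q n = a n / a (n+1)` the Calkin–Wilf sequence, the sequence
`r 0 = 0`, `r (2n) = q n`, `r (2n − 1) = −q n` (for `n ≥ 1`) is a bijection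
from the nonnegative integers onto the rationals. -/
theorem r_enumerates_rationals
    (a : ℕ → ℕ)
    (h1 : a 1 = 1)
    (heven : ∀ n : ℕ, 1 ≤ n → a (2 * n) = a n)
    (hodd : ∀ n : ℕ, 1 ≤ n → a (2 * n + 1) = a n + a (n + 1))
    (r : ℕ → ℚ)
    (hr0 : r 0 = 0)
    (hreven : ∀ n : ℕ, 1 ≤ n → r (2 * n) = (a n : ℚ) / (a (n + 1) : ℚ))
    (hrodd : ∀ n : ℕ, 1 ≤ n → r (2 * n - 1) = -((a n : ℚ) / (a (n + 1) : ℚ))) :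
    Function.Bijective r :=
  bijective_interleave_of_bijOn (isCalkinWilf_stern_ratio h1 heven hodd).bijOn hr0 hreven hrodd
end

section
/- Let a : ℕ → ℕ be Stern's diatomic sequence (a(1) = 1, a(2n) = a(n), a(2n+1) = a(n) + a(n+1)) and q(n) := a(n)/a(n+1). Suppose the binary representation of n ≥ 1, read from the least significant digit, consists of a run of f₀ ones, followed by a run of f₁ zeros, then f₂ ones, and so on, ending with a run of f_k ones at the most significant end (so f₀ ≥ 0 and f₁, …, f_k ≥ 1). Then q(n) equals the finite continued fraction [f₀; f₁, …, f_k] = f₀ + 1/(f₁ + 1/(f₂ + ⋯ + 1/f_k)). -/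
/-- Finite continued fraction `[x₀; x₁, …, x_k] = x₀ + 1/(x₁ + 1/(⋯ + 1/x_k))`. -/
def cfrac : List ℚ → ℚ
  | [] => 0
  | [x] => x
  | x :: xs => x + (cfrac xs)⁻¹

/-!
A trailing binary `1` adds one to `q`, since `q (2m+1) = q m + 1`, and a trailing `0` adds one to
`1/q`, since `1/q (2m) = 1/q m + 1`. Peeling off a run of `f₀` ones and then a run of `f₁` zeros
therefore gives `q n = f₀ + 1/(f₁ + 1/q n')`, where `n'` has the remaining runs, and induction on
the number of runs yields the continued fraction.
-/

lemma cfrac_cons_cons {l : List ℚ} (hl : l ≠ []) (x y : ℚ) :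
    cfrac (x :: y :: l) = x + (y + (cfrac l)⁻¹)⁻¹ := by
  obtain ⟨z, l, rfl⟩ := List.exists_cons_of_ne_nil hl
  rfl

lemma List.map_range_add_three {α : Type*} (g : ℕ → α) (k : ℕ) :
    (List.range (k + 3)).map g = g 0 :: g 1 :: (List.range (k + 1)).map (fun i => g (i + 2)) := by
  simp [List.range_succ_eq_map, Function.comp_def]

structure IsSternDiatomic (a : ℕ → ℕ) : Prop where
  one : a 1 = 1
  two_mul : ∀ m, 0 < m → a (2 * m) = a m
  two_mul_add_one : ∀ m, 0 < m → a (2 * m + 1) = a m + a (m + 1)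

def calkinWilf (a : ℕ → ℕ) (n : ℕ) : ℚ := a n / a (n + 1)

namespace IsSternDiatomic

variable {a : ℕ → ℕ} (ha : IsSternDiatomic a)
include ha

lemma pos {m : ℕ} (hm : 0 < m) : 0 < a m := by
  induction m using Nat.strong_induction_on with
  | _ m ih =>
    obtain ⟨t, rfl | rfl⟩ := Nat.even_or_odd' m
    · rw [ha.two_mul t (by omega)]
      exact ih t (by omega) (by omega)
    · rcases Nat.eq_zero_or_pos t with rfl | ht
      · simp [ha.one]
      · rw [ha.two_mul_add_one t ht]
        exact Nat.add_pos_left (ih t (by omega) ht) _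

lemma calkinWilf_two_mul_add_one {m : ℕ} (hm : 0 < m) :
    calkinWilf a (2 * m + 1) = calkinWilf a m + 1 := by
  have hm1 : (a (m + 1) : ℚ) ≠ 0 := by exact_mod_cast (ha.pos m.succ_pos).ne'
  rw [calkinWilf, calkinWilf, show 2 * m + 1 + 1 = 2 * (m + 1) by ring,
    ha.two_mul_add_one m hm, ha.two_mul (m + 1) m.succ_pos]
  push_cast
  field_simp

lemma inv_calkinWilf_two_mul {m : ℕ} (hm : 0 < m) :
    (calkinWilf a (2 * m))⁻¹ = (calkinWilf a m)⁻¹ + 1 := by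
  have hm0 : (a m : ℚ) ≠ 0 := by exact_mod_cast (ha.pos hm).ne'
  rw [calkinWilf, calkinWilf, ha.two_mul m hm, ha.two_mul_add_one m hm]
  push_cast
  rw [inv_div, inv_div]
  field_simp
  ring

lemma calkinWilf_ones (j : ℕ) {m : ℕ} (hm : 0 < m) :
    calkinWilf a (2 ^ j * m + (2 ^ j - 1)) = calkinWilf a m + j := by
  induction j generalizing m with
  | zero => simp
  | succ j ih =>
    have hj : 1 ≤ 2 ^ j := Nat.one_le_two_pow
    have hidx : 2 ^ (j + 1) * m + (2 ^ (j + 1) - 1) = 2 ^ j * (2 * m + 1) + (2 ^ j - 1) := by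
      rw [pow_succ]; ring_nf; omega
    rw [hidx, ih (by omega), ha.calkinWilf_two_mul_add_one hm]
    push_cast
    ring

lemma inv_calkinWilf_zeros (j : ℕ) {m : ℕ} (hm : 0 < m) :
    (calkinWilf a (2 ^ j * m))⁻¹ = (calkinWilf a m)⁻¹ + j := by
  induction j generalizing m with
  | zero => simp
  | succ j ih =>
    rw [pow_succ, mul_assoc, ih (by omega), ha.inv_calkinWilf_two_mul hm]
    push_cast
    ring

lemma calkinWilf_two_pow_sub_one {j : ℕ} (hj : j ≠ 0) : calkinWilf a (2 ^ j - 1) = j := by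
  obtain ⟨i, rfl⟩ := Nat.exists_eq_succ_of_ne_zero hj
  have hidx : 2 ^ (i + 1) - 1 = 2 ^ i * 1 + (2 ^ i - 1) := by
    have : 1 ≤ 2 ^ i := Nat.one_le_two_pow
    rw [pow_succ]; omega
  have hq1 : calkinWilf a 1 = 1 := by simp [calkinWilf, ha.one, ha.two_mul 1 one_pos]
  rw [hidx, ha.calkinWilf_ones i one_pos, hq1]
  push_cast
  ring

end IsSternDiatomic

/-- The number whose binary digits, from the least significant end, are runs of `f 0` ones,
`f 1` zeros, `f 2` ones, …, `f k` digits. -/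
def ofRunLengths (f : ℕ → ℕ) (k : ℕ) : ℕ :=
  ∑ i ∈ Finset.range (k + 1),
    if Even i then (2 ^ (f i) - 1) * 2 ^ (∑ j ∈ Finset.range i, f j) else 0

lemma ofRunLengths_zero (f : ℕ → ℕ) : ofRunLengths f 0 = 2 ^ f 0 - 1 := by
  simp [ofRunLengths]

lemma ofRunLengths_add_two (f : ℕ → ℕ) (k : ℕ) :
    ofRunLengths f (k + 2) =
      2 ^ f 0 * (2 ^ f 1 * ofRunLengths (fun i => f (i + 2)) k) + (2 ^ f 0 - 1) := by
  have hterm : ∀ i,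
      (if Even (i + 2) then (2 ^ f (i + 2) - 1) * 2 ^ (∑ j ∈ Finset.range (i + 2), f j) else 0) =
        2 ^ f 0 * (2 ^ f 1 *
          if Even i then (2 ^ f (i + 2) - 1) * 2 ^ (∑ j ∈ Finset.range i, f (j + 2)) else 0) := by
    intro i
    rw [Finset.sum_range_succ', Finset.sum_range_succ']
    split_ifs with h h' h'
    · rw [pow_add, pow_add]; ring
    · exact absurd (by simpa [Nat.even_add] using h) h'
    · exact absurd (by simpa [Nat.even_add] using h') h
    · simp
  rw [ofRunLengths, ofRunLengths, Finset.sum_range_succ', Finset.sum_range_succ']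
  simp only [hterm, ← Finset.mul_sum]
  simp

lemma pow_sub_one_le_ofRunLengths (f : ℕ → ℕ) (k : ℕ) : 2 ^ f 0 - 1 ≤ ofRunLengths f k := by
  cases k with
  | zero => rw [ofRunLengths_zero]
  | succ k => rw [ofRunLengths, Finset.sum_range_succ']; simp

lemma IsSternDiatomic.calkinWilf_ofRunLengths {a : ℕ → ℕ} (ha : IsSternDiatomic a) (r : ℕ)
    (f : ℕ → ℕ) (hf : ∀ i, 1 ≤ i → i ≤ 2 * r → 1 ≤ f i) (hn : 0 < ofRunLengths f (2 * r)) :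
    calkinWilf a (ofRunLengths f (2 * r)) =
      cfrac ((List.range (2 * r + 1)).map (fun i => (f i : ℚ))) := by
  induction r generalizing f with
  | zero =>
    rw [Nat.mul_zero, ofRunLengths_zero] at hn ⊢
    have hf0 : f 0 ≠ 0 := fun h => by simp [h] at hn
    simp [ha.calkinWilf_two_pow_sub_one hf0, cfrac]
  | succ r ih =>
    rw [Nat.mul_succ, ofRunLengths_add_two]
    have hg : 0 < ofRunLengths (fun i => f (i + 2)) (2 * r) := by
      have hf2 : f 2 ≠ 0 := Nat.one_le_iff_ne_zero.mp (hf 2 (by omega) (by omega))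
      have h2 : 2 ≤ 2 ^ f 2 := Nat.le_self_pow hf2 2
      have : 2 ^ f 2 - 1 ≤ ofRunLengths (fun i => f (i + 2)) (2 * r) :=
        pow_sub_one_le_ofRunLengths (fun i => f (i + 2)) _
      omega
    have hq := ih _ (fun i hi hir => hf (i + 2) (by omega) (by omega)) hg
    rw [ha.calkinWilf_ones _ (by positivity), ← inv_inv (calkinWilf a (2 ^ f 1 * _)),
      ha.inv_calkinWilf_zeros _ hg, hq, List.map_range_add_three, cfrac_cons_cons (by simp)]
    ring

/-- If the binary representation of `n ≥ 1`, read from the least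
significant digit, consists of a run of `f 0` ones, then `f 1` zeros, then
`f 2` ones, …, ending with a run of `f k` ones at the most significant end
(so `k` is even, `f 0 ≥ 0` and `f 1, …, f k ≥ 1`), i.e.
`n = ∑_{i ≤ k, i even} (2^(f i) − 1) · 2^(f 0 + ⋯ + f (i−1))`,
then the Calkin–Wilf value `q n = a n / a (n+1)` equals the continued
fraction `[f 0; f 1, …, f k]`. -/
theorem calkin_wilf_continued_fraction
    (a : ℕ → ℕ)
    (h1 : a 1 = 1)
    (heven : ∀ m : ℕ, 1 ≤ m → a (2 * m) = a m)
    (hodd : ∀ m : ℕ, 1 ≤ m → a (2 * m + 1) = a m + a (m + 1))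
    (k : ℕ) (hk : Even k)
    (f : ℕ → ℕ)
    (hf : ∀ i : ℕ, 1 ≤ i → i ≤ k → 1 ≤ f i)
    (n : ℕ)
    (hn : n = ∑ i ∈ Finset.range (k + 1),
      if Even i then (2 ^ (f i) - 1) * 2 ^ (∑ j ∈ Finset.range i, f j) else 0)
    (hn1 : 1 ≤ n) :
    (a n : ℚ) / (a (n + 1) : ℚ)
      = cfrac ((List.range (k + 1)).map (fun i => (f i : ℚ))) := by
  have ha : IsSternDiatomic a := ⟨h1, heven, hodd⟩
  obtain ⟨r, rfl⟩ := hk.two_dvd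
  subst hn
  exact ha.calkinWilf_ofRunLengths r f hf hn1
end

section
/- Let g : [0, 1] → ℝ be Lipschitz continuous with Lipschitz constant L₁ > 0, let ε > 0, let χ := (4306 + 837√6)/5832, and let n be a positive integer with n ≥ (2χL₁/ε)². Let B_n(x) := Σ_{k=0}^{n} g(k/n)·C(n,k)·x^k·(1−x)^{n−k} be the n-th Bernstein polynomial of g. Then |B_n(x) − g(x)| ≤ ε/2 for all x ∈ [0, 1]. -/
/-!
The Bernstein weights `C(n,k) xᵏ (1-x)ⁿ⁻ᵏ` form a probability distribution on the nodes `k/n`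
with mean `x` and variance `x(1-x)/n ≤ 1/(4n)`. The Lipschitz bound and Cauchy–Schwarz therefore
give `|Bₙ(x) − g(x)| ≤ L₁ · ∑ₖ |k/n − x| C(n,k) xᵏ (1-x)ⁿ⁻ᵏ ≤ L₁ / (2√n)`, which is at most `ε/2`
because `2χ ≥ 1` and the hypothesis on `n` says `2χL₁ ≤ ε√n`.
-/

open Finset Real Polynomial

namespace bernsteinPolynomial

section CommRing

variable {R : Type*} [CommRing R]

theorem eval_eq (n k : ℕ) (x : R) :
    (bernsteinPolynomial R n k).eval x = n.choose k * x ^ k * (1 - x) ^ (n - k) := by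
  simp [bernsteinPolynomial]

theorem sum_eval (n : ℕ) (x : R) :
    ∑ k ∈ range (n + 1), (bernsteinPolynomial R n k).eval x = 1 := by
  simpa [eval_finsetSum] using congrArg (eval x) (bernsteinPolynomial.sum R n)

theorem sum_sq_sub_mul_eval (n : ℕ) (x : R) :
    ∑ k ∈ range (n + 1), (n * x - k) ^ 2 * (bernsteinPolynomial R n k).eval x
      = n * x * (1 - x) := by
  simpa [eval_finsetSum, nsmul_eq_mul] using congrArg (eval x) (variance (R := R) n)

end CommRing

variable {n : ℕ} {x : ℝ}

theorem eval_nonneg (hx : x ∈ Set.Icc (0 : ℝ) 1) (k : ℕ) :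
    0 ≤ (bernsteinPolynomial ℝ n k).eval x := by
  have := hx.1
  have : 0 ≤ 1 - x := sub_nonneg.2 hx.2
  rw [eval_eq]
  positivity

theorem sum_sq_div_sub_mul_eval (hn : n ≠ 0) (x : ℝ) :
    ∑ k ∈ range (n + 1), ((k : ℝ) / n - x) ^ 2 * (bernsteinPolynomial ℝ n k).eval x
      = x * (1 - x) / n := by
  have hn' : (n : ℝ) ≠ 0 := Nat.cast_ne_zero.2 hn
  have hsq (k : ℕ) : ((k : ℝ) / n - x) ^ 2 = (n * x - k) ^ 2 / n ^ 2 := by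
    field_simp
    ring
  simp_rw [hsq, div_mul_eq_mul_div, ← sum_div, sum_sq_sub_mul_eval]
  field_simp

theorem sum_abs_div_sub_mul_eval_le (hn : n ≠ 0) (hx : x ∈ Set.Icc (0 : ℝ) 1) :
    ∑ k ∈ range (n + 1), |(k : ℝ) / n - x| * (bernsteinPolynomial ℝ n k).eval x
      ≤ 1 / (2 * √n) := by
  have cauchy_schwarz := sum_sq_le_sum_mul_sum_of_sq_le_mul (range (n + 1))
    (r := fun k ↦ |(k : ℝ) / n - x| * (bernsteinPolynomial ℝ n k).eval x)
    (f := fun k ↦ (bernsteinPolynomial ℝ n k).eval x)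
    (g := fun k ↦ ((k : ℝ) / n - x) ^ 2 * (bernsteinPolynomial ℝ n k).eval x)
    (fun k _ ↦ eval_nonneg hx k) (fun k _ ↦ mul_nonneg (sq_nonneg _) (eval_nonneg hx k))
    (fun k _ ↦ le_of_eq (by rw [mul_pow, sq_abs]; ring))
  rw [sum_eval, one_mul, sum_sq_div_sub_mul_eval hn] at cauchy_schwarz
  have hn' : (0 : ℝ) < n := Nat.cast_pos.2 (Nat.pos_of_ne_zero hn)
  have hvar : x * (1 - x) / n ≤ (1 / (2 * √n)) ^ 2 := by
    rw [div_pow, mul_pow, sq_sqrt hn'.le, div_le_div_iff₀ hn' (by positivity)]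
    nlinarith [sq_nonneg (2 * x - 1)]
  exact le_of_sq_le_sq (cauchy_schwarz.trans hvar) (by positivity)

variable {g : ℝ → ℝ} {L : ℝ}

theorem abs_sum_mul_eval_sub_le
    (hg : ∀ x ∈ Set.Icc (0 : ℝ) 1, ∀ y ∈ Set.Icc (0 : ℝ) 1, |g x - g y| ≤ L * |x - y|)
    (hx : x ∈ Set.Icc (0 : ℝ) 1) :
    |∑ k ∈ range (n + 1), g ((k : ℝ) / n) * (bernsteinPolynomial ℝ n k).eval x - g x|
      ≤ L * ∑ k ∈ range (n + 1), |(k : ℝ) / n - x| * (bernsteinPolynomial ℝ n k).eval x := by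
  have hnode {k : ℕ} (hk : k ∈ range (n + 1)) : (k : ℝ) / n ∈ Set.Icc (0 : ℝ) 1 :=
    ⟨by positivity, div_le_one_of_le₀ (by exact_mod_cast Nat.lt_succ_iff.1 (mem_range.1 hk))
      n.cast_nonneg⟩
  conv_lhs => rw [← mul_one (g x), ← sum_eval n x, mul_sum, ← sum_sub_distrib]
  simp_rw [← sub_mul, mul_sum]
  refine (abs_sum_le_sum_abs _ _).trans (sum_le_sum fun k hk ↦ ?_)
  rw [abs_mul, abs_of_nonneg (eval_nonneg hx k), ← mul_assoc]
  exact mul_le_mul_of_nonneg_right (hg _ (hnode hk) x hx) (eval_nonneg hx k)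

theorem abs_sum_mul_eval_sub_le_div_sqrt (hL : 0 ≤ L)
    (hg : ∀ x ∈ Set.Icc (0 : ℝ) 1, ∀ y ∈ Set.Icc (0 : ℝ) 1, |g x - g y| ≤ L * |x - y|)
    (hn : n ≠ 0) (hx : x ∈ Set.Icc (0 : ℝ) 1) :
    |∑ k ∈ range (n + 1), g ((k : ℝ) / n) * (bernsteinPolynomial ℝ n k).eval x - g x|
      ≤ L / (2 * √n) :=
  calc _ ≤ _ := abs_sum_mul_eval_sub_le hg hx
    _ ≤ L * (1 / (2 * √n)) := mul_le_mul_of_nonneg_left (sum_abs_div_sub_mul_eval_le hn hx) hL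
    _ = L / (2 * √n) := mul_one_div L _

end bernsteinPolynomial

/-- If `g` is Lipschitz on `[0, 1]` with constant `L₁ > 0`,
`χ = (4306 + 837√6)/5832` is Sikkema's constant, and `n ≥ (2χL₁/ε)²` is a
positive integer, then the `n`-th Bernstein polynomial of `g` satisfies
`|Bₙ(x) − g(x)| ≤ ε/2` on `[0, 1]`. -/
theorem bernstein_approximation_lipschitz
    (g : ℝ → ℝ) (L₁ : ℝ) (hL₁ : 0 < L₁)
    (hg : ∀ x ∈ Set.Icc (0 : ℝ) 1, ∀ y ∈ Set.Icc (0 : ℝ) 1,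
      |g x - g y| ≤ L₁ * |x - y|)
    (ε : ℝ) (hε : 0 < ε)
    (χ : ℝ) (hχ : χ = (4306 + 837 * Real.sqrt 6) / 5832)
    (n : ℕ) (hn : 1 ≤ n) (hn2 : (2 * χ * L₁ / ε) ^ 2 ≤ (n : ℝ)) :
    ∀ x ∈ Set.Icc (0 : ℝ) 1,
      |(∑ k ∈ Finset.range (n + 1),
          g ((k : ℝ) / (n : ℝ)) * (n.choose k : ℝ) * x ^ k * (1 - x) ^ (n - k))
        - g x| ≤ ε / 2 := by
  intro x hx
  have hχ_ge : 1 ≤ 2 * χ := by rw [hχ]; linarith [sqrt_nonneg 6]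
  have hL₁ε : 2 * χ * L₁ ≤ ε * √n := by
    rw [← div_le_iff₀' hε]
    exact le_sqrt_of_sq_le hn2
  have hn' : 0 < √n := sqrt_pos.2 (by exact_mod_cast hn)
  calc _ = |∑ k ∈ range (n + 1), g ((k : ℝ) / n) * (bernsteinPolynomial ℝ n k).eval x - g x| := by
        simp only [bernsteinPolynomial.eval_eq, mul_assoc]
    _ ≤ L₁ / (2 * √n) :=
        bernsteinPolynomial.abs_sum_mul_eval_sub_le_div_sqrt hL₁.le hg (by omega) hx
    _ ≤ ε / 2 := by
      rw [div_le_div_iff₀ (by positivity) two_pos]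
      nlinarith
end
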